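/- Let V be a real vector space of dimension 4, j : V → V a linear map with j∘j = −id, and T : V × V → V a bilinear map with T(X,Y) = −T(Y,X) and T(jX, Y) = −j(T(X,Y)) for all X, Y. Then the linear span of the image of T has dimension at most 2. -/
import Mathlib

/-- Let `V` be a real vector space of dimension `4`, `j : V → V` linear
with `j ∘ j = -id`, and `T : V × V → V` bilinear with `T X Y = -T Y X` and
`T (j X) Y = -j (T X Y)`.  Then the span of the image of `T` has dimension at most `2`. -/
theorem stmt_4 (V : Type*) [AddCommGroup V] [Module ℝ V] [FiniteDimensional ℝ V]
    (hdim : Module.finrank ℝ V = 4)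
    (j : V →ₗ[ℝ] V) (hj2 : ∀ X : V, j (j X) = -X)
    (T : V →ₗ[ℝ] V →ₗ[ℝ] V)
    (hskew : ∀ X Y : V, T X Y = - T Y X)
    (hTj : ∀ X Y : V, T (j X) Y = - j (T X Y)) :
    Module.finrank ℝ ↥(Submodule.span ℝ {v : V | ∃ X Y : V, v = T X Y}) ≤ 2 := by
  -- complex structure on V
  letI : SMul ℂ V := ⟨fun c v => c.re • v + c.im • j v⟩
  have hsmul : ∀ (c : ℂ) (v : V), c • v = c.re • v + c.im • j v := fun _ _ => rfl
  letI : Module ℂ V :=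
    { smul := (· • ·)
      one_smul := by intro v; simp [hsmul]
      mul_smul := by
        intro a b v
        simp only [hsmul, Complex.mul_re, Complex.mul_im, map_add, map_smul, hj2,
          smul_add, smul_smul, smul_neg, sub_smul, add_smul]
        module
      smul_zero := by intro a; simp [hsmul]
      smul_add := by intro a v w; simp only [hsmul, map_add, smul_add]; module
      add_smul := by
        intro a b v
        simp only [hsmul, Complex.add_re, Complex.add_im, add_smul]
        module
      zero_smul := by intro v; simp [hsmul] }
  letI : IsScalarTower ℝ ℂ V := by
    constructor
    intro r c v
    simp [hsmul, Complex.mul_re, Complex.mul_im, mul_smul]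
  haveI : FiniteDimensional ℂ V := FiniteDimensional.right ℝ ℂ V
  have hV2 : Module.finrank ℂ V = 2 := by
    have h := Module.finrank_mul_finrank ℝ ℂ V
    rw [Complex.finrank_real_complex, hdim] at h
    omega
  obtain b := Module.finBasisOfFinrankEq ℂ V hV2
  set e := b 0 with he
  set f := b 1 with hf
  set w := T e f with hw
  -- conjugate linearity
  have hc1 : ∀ (c : ℂ) (X Y : V), T (c • X) Y = (starRingEnd ℂ) c • T X Y := by
    intro c X Y
    simp only [hsmul, map_add, map_smul, LinearMap.add_apply, LinearMap.smul_apply, hTj,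
      Complex.conj_re, Complex.conj_im, neg_smul, smul_neg]
  have hc2 : ∀ (c : ℂ) (X Y : V), T X (c • Y) = (starRingEnd ℂ) c • T X Y := by
    intro c X Y
    rw [hskew, hc1, hskew Y X, smul_neg, neg_neg]
  have hTdiag : ∀ X : V, T X X = 0 := by
    intro X
    have h := hskew X X
    have h2 : (2 : ℝ) • T X X = 0 := by rw [two_smul]; nth_rewrite 1 [h]; abel
    simpa using h2
  have hfe : T f e = -w := by rw [hskew]
  -- every value is a complex multiple of w
  have hmem : ∀ X Y : V, ∃ c : ℂ, T X Y = c • w := by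
    intro X Y
    have hX : X = b.repr X 0 • e + b.repr X 1 • f := by
      have h := b.sum_repr X
      rw [Fin.sum_univ_two] at h
      exact h.symm
    have hY : Y = b.repr Y 0 • e + b.repr Y 1 • f := by
      have h := b.sum_repr Y
      rw [Fin.sum_univ_two] at h
      exact h.symm
    refine ⟨(starRingEnd ℂ) (b.repr X 0) * (starRingEnd ℂ) (b.repr Y 1)
      - (starRingEnd ℂ) (b.repr X 1) * (starRingEnd ℂ) (b.repr Y 0), ?_⟩
    conv_lhs => rw [hX, hY]
    simp only [map_add, LinearMap.add_apply, hc1, hc2, hTdiag, hfe, ← hw,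
      smul_smul, smul_neg, smul_zero, sub_smul]
    abel
  -- conclude
  have hsub : Submodule.span ℝ {v : V | ∃ X Y : V, v = T X Y} ≤
      Submodule.span ℝ ({w, j w} : Set V) := by
    rw [Submodule.span_le]
    rintro v ⟨X, Y, rfl⟩
    obtain ⟨c, hc⟩ := hmem X Y
    rw [hc, hsmul]
    exact Submodule.add_mem _
      (Submodule.smul_mem _ _ (Submodule.subset_span (Or.inl rfl)))
      (Submodule.smul_mem _ _ (Submodule.subset_span (Or.inr rfl)))
  calc Module.finrank ℝ ↥(Submodule.span ℝ {v : V | ∃ X Y : V, v = T X Y})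
      ≤ Module.finrank ℝ ↥(Submodule.span ℝ ({w, j w} : Set V)) :=
        Submodule.finrank_mono hsub
    _ ≤ 2 := by
        classical
        have hset : ({w, j w} : Set V) = (({w, j w} : Finset V) : Set V) := by simp
        rw [hset]
        exact (finrank_span_finset_le_card _).trans
          ((Finset.card_insert_le _ _).trans (by simp))
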